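/- arXiv:2504.19671 — 2 statements merged into one kernel-verified Lean document; each statement's English description precedes it below -/
import Mathlib

section
/- For p ≥ 3, the mutual-visibility number of the Sierpiński graph S_p^2 equals (p+1)²/4 if p is odd and p(p+2)/4 if p is even. -/
open SimpleGraph

/-- A walk is a shortest path: it is a path whose length equals the graph distance. -/
def IsShortest {V : Type*} (G : SimpleGraph V) {u v : V} (p : G.Walk u v) : Prop :=
  p.IsPath ∧ p.length = G.dist u v

/-- `u` and `v` are `X`-visible: some shortest `u,v`-path meets `X` only in `{u,v}`. -/
def Visible {V : Type*} (G : SimpleGraph V) (X : Set V) (u v : V) : Prop :=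
  ∃ p : G.Walk u v, IsShortest G p ∧ ∀ w ∈ p.support, w ∈ X → w = u ∨ w = v

/-- `u` and `v` are `X`-positionable: every shortest `u,v`-path meets `X` only in `{u,v}`. -/
def Positionable {V : Type*} (G : SimpleGraph V) (X : Set V) (u v : V) : Prop :=
  ∀ p : G.Walk u v, IsShortest G p → ∀ w ∈ p.support, w ∈ X → w = u ∨ w = v

def MutualVisibilitySet {V : Type*} (G : SimpleGraph V) (X : Set V) : Prop :=
  ∀ u ∈ X, ∀ v ∈ X, Visible G X u v

def TotalMVSet {V : Type*} (G : SimpleGraph V) (X : Set V) : Prop :=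
  ∀ u v : V, Visible G X u v

def OuterMVSet {V : Type*} (G : SimpleGraph V) (X : Set V) : Prop :=
  MutualVisibilitySet G X ∧ ∀ u ∈ X, ∀ v ∉ X, Visible G X u v

def DualMVSet {V : Type*} (G : SimpleGraph V) (X : Set V) : Prop :=
  MutualVisibilitySet G X ∧ ∀ u ∉ X, ∀ v ∉ X, Visible G X u v

def GeneralPositionSet {V : Type*} (G : SimpleGraph V) (X : Set V) : Prop :=
  ∀ u ∈ X, ∀ v ∈ X, Positionable G X u v

def TotalGPSet {V : Type*} (G : SimpleGraph V) (X : Set V) : Prop :=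
  ∀ u v : V, Positionable G X u v

def OuterGPSet {V : Type*} (G : SimpleGraph V) (X : Set V) : Prop :=
  GeneralPositionSet G X ∧ ∀ u ∈ X, ∀ v ∉ X, Positionable G X u v

def DualGPSet {V : Type*} (G : SimpleGraph V) (X : Set V) : Prop :=
  GeneralPositionSet G X ∧ ∀ u ∉ X, ∀ v ∉ X, Positionable G X u v

/-- The maximum cardinality of a set of vertices satisfying `P`. -/
noncomputable def maxCard {V : Type*} (P : Set V → Prop) : ℕ :=
  sSup {n : ℕ | ∃ X : Set V, P X ∧ X.ncard = n}

/-- The number of sets achieving `maxCard P`. -/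
noncomputable def numMaxSets {V : Type*} (P : Set V → Prop) : ℕ :=
  {X : Set V | P X ∧ X.ncard = maxCard P}.ncard

/-- A vertex is simplicial if its neighborhood induces a complete graph. -/
def Simplicial {V : Type*} (G : SimpleGraph V) (v : V) : Prop :=
  ∀ u w : V, G.Adj v u → G.Adj v w → u ≠ w → G.Adj u w

/-- A set of vertices is convex: every shortest path between its vertices stays inside it. -/
def ConvexSet {V : Type*} (G : SimpleGraph V) (S : Set V) : Prop :=
  ∀ u ∈ S, ∀ v ∈ S, ∀ p : G.Walk u v, IsShortest G p → ∀ w ∈ p.support, w ∈ S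

/-- The Sierpiński graph `S_p^2` on vertex set `[p]_0 × [p]_0`:
`(i,j) ~ (i,j')` for `j ≠ j'`, and `(i,j) ~ (j,i)` for `i ≠ j`. -/
def SP2 (p : ℕ) : SimpleGraph (Fin p × Fin p) where
  Adj u v := (u.1 = v.1 ∧ u.2 ≠ v.2) ∨ (v.1 = u.2 ∧ v.2 = u.1 ∧ u.1 ≠ u.2)
  symm := by
    constructor
    rintro ⟨a, b⟩ ⟨c, d⟩ (⟨h1, h2⟩ | ⟨h1, h2, h3⟩) <;> simp_all <;> tauto
  loopless := by
    constructor
    rintro ⟨a, b⟩ (⟨h1, h2⟩ | ⟨h1, h2, h3⟩) <;> simp_all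

/-!
Call the vertices `(i, ·)` block `i`. A shortest path between distinct blocks `i` and `j` either
crosses the bridge edge `(i, j) — (j, i)` or, when both ends lie in a common column `c`, detours
through block `c`. Hence a mutual-visibility set `X` containing the bridge vertex `(i, j)` and
another vertex `(i, c)` cannot meet both blocks `j` and `c`: in every block, at most one column of
`X` indexes a block met by `X`. If `X` meets `k` blocks, each holds at most `1 + (p - k)` vertices
of `X`, so `|X| ≤ k (p + 1 - k) ≤ ⌊(p + 1)² / 4⌋`, which is the claimed value for both parities of
`p`. The bound is attained by `extremalSet p (p / 2 + 1)`: two of its vertices in different blocks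
see each other across the bridge edge between their blocks, whose ends lie outside the set.
-/

lemma Nat.mul_sub_le_sq_div_four (k n : ℕ) : k * (n - k) ≤ n ^ 2 / 4 := by
  rcases le_total k n with hkn | hnk
  · rw [Nat.le_div_iff_mul_le four_pos]
    have := four_mul_le_sq_add k (n - k)
    rw [Nat.add_sub_cancel' hkn] at this
    linarith
  · simp [Nat.sub_eq_zero_of_le hnk]

lemma Nat.half_add_one_mul_eq_sq_div_four (p : ℕ) :
    (p / 2 + 1) * (p + 1 - (p / 2 + 1)) = (p + 1) ^ 2 / 4 := by
  obtain ⟨a, rfl | rfl⟩ := Nat.even_or_odd' p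
  · rw [show 2 * a / 2 + 1 = a + 1 by omega, show 2 * a + 1 - (a + 1) = a by omega,
      show (2 * a + 1) ^ 2 = 4 * ((a + 1) * a) + 1 by ring]
    omega
  · rw [show (2 * a + 1) / 2 + 1 = a + 1 by omega, show 2 * a + 1 + 1 - (a + 1) = a + 1 by omega,
      show (2 * a + 1 + 1) ^ 2 = 4 * ((a + 1) * (a + 1)) by ring]
    omega

lemma Nat.succ_sq_div_four_eq_ite (p : ℕ) :
    (p + 1) ^ 2 / 4 = if Odd p then (p + 1) ^ 2 / 4 else p * (p + 2) / 4 := by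
  split_ifs with h
  · rfl
  obtain ⟨a, rfl⟩ := Nat.not_odd_iff_even.mp h
  have h₁ : (a + a + 1) ^ 2 = 4 * (a * (a + 1)) + 1 := by ring
  have h₂ : (a + a) * (a + a + 2) = 4 * (a * (a + 1)) := by ring
  rw [h₁, h₂]
  omega

lemma Set.ncard_eq_sum_ncard_preimage_mk {α β : Type*} [Fintype α] [Fintype β]
    (X : Set (α × β)) : X.ncard = ∑ a, (Prod.mk a ⁻¹' X).ncard := by
  classical
  simp only [Set.ncard_eq_toFinset_card', Set.toFinset_card, Fintype.card_subtype,
    Finset.card_filter, Fintype.sum_prod_type, Set.mem_preimage]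

namespace SimpleGraph

variable {V : Type*} {G : SimpleGraph V} {u v : V}

lemma three_le_dist (hr : G.Reachable u v) (hne : u ≠ v) (hadj : ¬G.Adj u v)
    (hcn : ∀ w, G.Adj u w → ¬G.Adj w v) : 3 ≤ G.dist u v := by
  obtain ⟨W, hW⟩ := hr.exists_walk_length_eq_dist
  rw [← hW]
  rcases W with _ | ⟨h₁, _ | ⟨h₂, _ | ⟨h₃, W⟩⟩⟩
  · exact absurd rfl hne
  · exact absurd h₁ hadj
  · exact absurd h₂ (hcn _ h₁)
  · simp

end SimpleGraph

section Visible

variable {V : Type*} {G : SimpleGraph V} {X : Set V} {u v w₁ w₂ : V}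

lemma visible_self : Visible G X u u :=
  ⟨.nil, ⟨.nil, by simp⟩, fun w hw _ => by simp_all⟩

lemma visible_of_adj (h : G.Adj u v) : Visible G X u v :=
  ⟨h.toWalk, ⟨by simp [h.ne], by simp [dist_eq_one_iff_adj.mpr h]⟩,
    fun w hw _ => by simpa using hw⟩

lemma visible_of_adj_adj_adj (h₁ : G.Adj u w₁) (h₂ : G.Adj w₁ w₂) (h₃ : G.Adj w₂ v)
    (hd : G.dist u v = 3) (hw₁ : w₁ ∉ X) (hw₂ : w₂ ∉ X) : Visible G X u v := by
  let W : G.Walk u v := .cons h₁ (.cons h₂ (.cons h₃ .nil))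
  have hW : W.length = G.dist u v := by simp [W, hd]
  refine ⟨W, ⟨W.isPath_of_length_eq_dist hW, hW⟩, fun w hw hwX => ?_⟩
  simp only [W, Walk.support_cons, Walk.support_nil, List.mem_cons, List.not_mem_nil,
    or_false] at hw
  rcases hw with rfl | rfl | rfl | rfl <;> simp_all

lemma Visible.exists_adj_adj_notMem (h : Visible G X u v) (hd : G.dist u v = 2) :
    ∃ w, G.Adj u w ∧ G.Adj w v ∧ w ∉ X := by
  obtain ⟨W, ⟨-, hlen⟩, hX⟩ := h
  rw [hd] at hlen
  rcases W with _ | ⟨h₁, _ | ⟨h₂, _ | ⟨h₃, W⟩⟩⟩ <;> simp at hlen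
  refine ⟨_, h₁, h₂, fun hw => ?_⟩
  rcases hX _ (by simp) hw with rfl | rfl
  · exact h₁.ne rfl
  · exact h₂.ne rfl

lemma Visible.exists_adj_adj_adj_notMem (h : Visible G X u v) (hd : G.dist u v = 3) :
    ∃ w₁ w₂, G.Adj u w₁ ∧ G.Adj w₁ w₂ ∧ G.Adj w₂ v ∧ w₁ ∉ X ∧ w₂ ∉ X := by
  obtain ⟨W, ⟨-, hlen⟩, hX⟩ := h
  rw [hd] at hlen
  rcases W with _ | ⟨h₁, _ | ⟨h₂, _ | ⟨h₃, _ | ⟨h₄, W⟩⟩⟩⟩ <;> simp at hlen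
  have hnadj : ¬G.Adj u v := fun h => by simp [dist_eq_one_iff_adj.mpr h] at hd
  refine ⟨_, _, h₁, h₂, h₃, fun hw => ?_, fun hw => ?_⟩
  · rcases hX _ (by simp) hw with rfl | rfl
    · exact h₁.ne rfl
    · exact hnadj h₁
  · rcases hX _ (by simp) hw with rfl | rfl
    · exact hnadj h₃
    · exact h₃.ne rfl

end Visible

namespace SP2

variable {p : ℕ} {X : Set (Fin p × Fin p)} {i j x y c z w : Fin p}

lemma adj_of_snd_ne (h : x ≠ y) : (SP2 p).Adj (i, x) (i, y) := Or.inl ⟨rfl, h⟩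

lemma adj_bridge (h : i ≠ j) : (SP2 p).Adj (i, j) (j, i) := Or.inr ⟨rfl, rfl, h⟩

lemma not_adj (hij : i ≠ j) (hxj : x ≠ j) : ¬(SP2 p).Adj (i, x) (j, y) := by
  rintro (⟨h, -⟩ | ⟨h, -, -⟩)
  exacts [hij h, hxj h.symm]

lemma eq_bridge_of_adj_adj (hij : i ≠ j) {v : Fin p × Fin p}
    (h₁ : (SP2 p).Adj (i, x) v) (h₂ : (SP2 p).Adj v (j, i)) : v = (i, j) := by
  obtain ⟨a, b⟩ := v
  rcases h₁ with ⟨e₁, e₂⟩ | ⟨e₁, e₂, e₃⟩ <;> rcases h₂ with ⟨f₁, f₂⟩ | ⟨f₁, f₂, f₃⟩ <;> simp_all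

lemma adj_adj_adj_cases (hij : i ≠ j) (hxj : x ≠ j) (hyi : y ≠ i) {v₁ v₂ : Fin p × Fin p}
    (h₁ : (SP2 p).Adj (i, x) v₁) (h₂ : (SP2 p).Adj v₁ v₂) (h₃ : (SP2 p).Adj v₂ (j, y)) :
    (v₁ = (i, j) ∧ v₂ = (j, i)) ∨ (x = y ∧ v₁ = (x, i) ∧ v₂ = (x, j)) := by
  obtain ⟨a, b⟩ := v₁
  obtain ⟨c, d⟩ := v₂
  rcases h₁ with ⟨e₁, e₂⟩ | ⟨e₁, e₂, e₃⟩ <;> rcases h₃ with ⟨f₁, f₂⟩ | ⟨f₁, f₂, f₃⟩ <;>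
    rcases h₂ with ⟨g₁, g₂⟩ | ⟨g₁, g₂, g₃⟩ <;> simp_all

lemma dist_eq_two (hij : i ≠ j) (hxj : x ≠ j) : (SP2 p).dist (i, x) (j, i) = 2 :=
  le_antisymm (dist_le (.cons (adj_of_snd_ne hxj) (.cons (adj_bridge hij) .nil)))
    (Reachable.one_lt_dist_of_ne_of_not_adj
      ((adj_of_snd_ne hxj).reachable.trans (adj_bridge hij).reachable) (by simp [hij])
      (not_adj hij hxj))

lemma dist_eq_three (hij : i ≠ j) (hxj : x ≠ j) (hyi : y ≠ i) :
    (SP2 p).dist (i, x) (j, y) = 3 := by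
  have h₁ := adj_of_snd_ne (i := i) hxj
  have h₂ := adj_bridge hij
  have h₃ := adj_of_snd_ne (i := j) hyi.symm
  refine le_antisymm (dist_le (.cons h₁ (.cons h₂ (.cons h₃ .nil))))
    (three_le_dist (h₁.reachable.trans (h₂.reachable.trans h₃.reachable)) (by simp [hij])
      (not_adj hij hxj) fun ⟨a, b⟩ e f => ?_)
  rcases e with ⟨e₁, e₂⟩ | ⟨e₁, e₂, e₃⟩ <;> rcases f with ⟨f₁, f₂⟩ | ⟨f₁, f₂, f₃⟩ <;> simp_all

lemma not_visible_of_bridge_mem (hij : i ≠ j) (hxj : x ≠ j) (hX : (i, j) ∈ X) :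
    ¬Visible (SP2 p) X (i, x) (j, i) := fun h => by
  obtain ⟨v, h₁, h₂, hv⟩ := h.exists_adj_adj_notMem (dist_eq_two hij hxj)
  exact hv (eq_bridge_of_adj_adj hij h₁ h₂ ▸ hX)

lemma eq_of_visible_of_bridge_mem (hij : i ≠ j) (hxj : x ≠ j) (hyi : y ≠ i) (hX : (i, j) ∈ X)
    (h : Visible (SP2 p) X (i, x) (j, y)) : x = y ∧ (x, i) ∉ X ∧ (x, j) ∉ X := by
  obtain ⟨v₁, v₂, h₁, h₂, h₃, hv₁, hv₂⟩ := h.exists_adj_adj_adj_notMem (dist_eq_three hij hxj hyi)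
  rcases adj_adj_adj_cases hij hxj hyi h₁ h₂ h₃ with ⟨rfl, -⟩ | ⟨hxy, rfl, rfl⟩
  · exact absurd hX hv₁
  · exact ⟨hxy, hv₁, hv₂⟩

lemma eq_of_mem_of_blocks_meet (hX : MutualVisibilitySet (SP2 p) X) (hij : i ≠ j)
    (hj : (i, j) ∈ X) (hc : (i, c) ∈ X) (hjz : (j, z) ∈ X) (hcw : (c, w) ∈ X) : c = j := by
  by_contra hcj
  have hzi : z ≠ i := by
    rintro rfl
    exact not_visible_of_bridge_mem hij hcj hj (hX _ hc _ hjz)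
  obtain ⟨rfl, hci, hcj'⟩ := eq_of_visible_of_bridge_mem hij hcj hzi hj (hX _ hc _ hjz)
  have hwi : w ≠ i := by
    rintro rfl
    exact hci hcw
  obtain ⟨rfl, -⟩ := eq_of_visible_of_bridge_mem hzi.symm (Ne.symm hcj) hwi hc (hX _ hj _ hcw)
  exact hcj' hcw

lemma ncard_preimage_mk_inter_image_fst_le_one (hX : MutualVisibilitySet (SP2 p) X)
    (i : Fin p) : (Prod.mk i ⁻¹' X ∩ Prod.fst '' X).ncard ≤ 1 := by
  rw [Set.ncard_le_one]
  rintro _ ⟨ha, ⟨a, z⟩, hz, rfl⟩ _ ⟨hb, ⟨b, w⟩, hw, rfl⟩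
  rcases eq_or_ne i a with rfl | hia
  · rcases eq_or_ne i b with rfl | hib
    · rfl
    · exact eq_of_mem_of_blocks_meet hX hib hb ha hw hz
  · exact (eq_of_mem_of_blocks_meet hX hia ha hb hz hw).symm

lemma ncard_preimage_mk_le (hX : MutualVisibilitySet (SP2 p) X) (i : Fin p) :
    (Prod.mk i ⁻¹' X).ncard ≤ 1 + (p - (Prod.fst '' X).ncard) := by
  rw [← Set.ncard_inter_add_ncard_sdiff_eq_ncard _ (Prod.fst '' X)]
  gcongr
  · exact ncard_preimage_mk_inter_image_fst_le_one hX i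
  · calc (Prod.mk i ⁻¹' X \ Prod.fst '' X).ncard ≤ (Prod.fst '' X)ᶜ.ncard :=
          Set.ncard_le_ncard (Set.sdiff_subset_compl _ _)
      _ = p - (Prod.fst '' X).ncard := by
          rw [Set.ncard_compl, Nat.card_eq_fintype_card, Fintype.card_fin]

theorem ncard_le (hX : MutualVisibilitySet (SP2 p) X) : X.ncard ≤ (p + 1) ^ 2 / 4 := by
  classical
  set k := (Prod.fst '' X).ncard
  have hk : k ≤ p := by simpa using Set.ncard_le_card (Prod.fst '' X)
  have hrow : ∀ i ∉ (Prod.fst '' X).toFinset, (Prod.mk i ⁻¹' X).ncard = 0 := fun i hi => by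
    simp only [Set.mem_toFinset] at hi
    rw [Set.ncard_eq_zero]
    exact Set.eq_empty_of_forall_notMem fun z hz => hi ⟨_, hz, rfl⟩
  calc X.ncard = ∑ i ∈ (Prod.fst '' X).toFinset, (Prod.mk i ⁻¹' X).ncard := by
        rw [Set.ncard_eq_sum_ncard_preimage_mk,
          Finset.sum_subset (Finset.subset_univ _) fun i _ hi => hrow i hi]
    _ ≤ (Prod.fst '' X).toFinset.card • (1 + (p - k)) :=
        Finset.sum_le_card_nsmul _ _ _ fun i _ => ncard_preimage_mk_le hX i
    _ = k * (p + 1 - k) := by rw [← Set.ncard_eq_toFinset_card', smul_eq_mul]; congr 1; omega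
    _ ≤ (p + 1) ^ 2 / 4 := Nat.mul_sub_le_sq_div_four k (p + 1)

end SP2

namespace SP2

def extremalSet (p q : ℕ) : Set (Fin p × Fin p) :=
  {v | (v.1 : ℕ) < q ∧ (q ≤ (v.2 : ℕ) ∨ v.2 = v.1)}

lemma mutualVisibilitySet_extremalSet (p q : ℕ) :
    MutualVisibilitySet (SP2 p) (extremalSet p q) := by
  rintro ⟨i, x⟩ ⟨hi, hx⟩ ⟨j, y⟩ ⟨hj, hy⟩
  dsimp only at hi hx hj hy
  rcases eq_or_ne i j with rfl | hij
  · rcases eq_or_ne x y with rfl | hxy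
    exacts [visible_self, visible_of_adj (adj_of_snd_ne hxy)]
  have hxj : x ≠ j := by
    rintro rfl
    rcases hx with h | rfl
    exacts [by omega, hij rfl]
  have hyi : y ≠ i := by
    rintro rfl
    rcases hy with h | rfl
    exacts [by omega, hij rfl]
  refine visible_of_adj_adj_adj (adj_of_snd_ne hxj) (adj_bridge hij) (adj_of_snd_ne hyi.symm)
    (dist_eq_three hij hxj hyi) ?_ ?_
  · rintro ⟨-, h | h⟩
    exacts [Nat.not_le.mpr hj h, hij h.symm]
  · rintro ⟨-, h | h⟩
    exacts [Nat.not_le.mpr hi h, hij h]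

lemma ncard_extremalSet {p q : ℕ} (hq : q ≤ p) : (extremalSet p q).ncard = q * (p + 1 - q) := by
  classical
  have hrow : ∀ i : Fin p, (Prod.mk i ⁻¹' extremalSet p q).ncard =
      if (i : ℕ) < q then p + 1 - q else 0 := fun i => by
    by_cases hi : (i : ℕ) < q
    · have hpre : Prod.mk i ⁻¹' extremalSet p q = insert i {j : Fin p | (j : ℕ) < q}ᶜ := by
        ext j
        simp [extremalSet, hi, or_comm]
      have hlt : {j : Fin p | (j : ℕ) < q}.ncard = q := by
        simp [Set.ncard_eq_toFinset_card', Fin.card_filter_val_lt, hq]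
      rw [if_pos hi, hpre, Set.ncard_insert_of_notMem (by simpa using hi), Set.ncard_compl, hlt]
      simp only [Nat.card_eq_fintype_card, Fintype.card_fin]
      omega
    · rw [if_neg hi, Set.ncard_eq_zero]
      ext j
      simp [extremalSet, hi]
  rw [Set.ncard_eq_sum_ncard_preimage_mk, Finset.sum_congr rfl fun i _ => hrow i,
    Finset.sum_ite, Finset.sum_const_zero, Finset.sum_const, Fin.card_filter_val_lt, smul_eq_mul,
    min_eq_right hq, add_zero]

end SP2

/-- The mutual-visibility number of `S_p^2`. -/
theorem stmt_5 (p : ℕ) (hp : 3 ≤ p) :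
    maxCard (MutualVisibilitySet (SP2 p)) =
      if Odd p then (p + 1) ^ 2 / 4 else p * (p + 2) / 4 := by
  rw [← Nat.succ_sq_div_four_eq_ite]
  refine IsGreatest.csSup_eq ⟨⟨SP2.extremalSet p (p / 2 + 1),
    SP2.mutualVisibilitySet_extremalSet p _, ?_⟩, fun _ ⟨X, hX, hn⟩ => hn ▸ SP2.ncard_le hX⟩
  rw [SP2.ncard_extremalSet (by omega), Nat.half_add_one_mul_eq_sq_div_four]
end

section
/- For p ≥ 3 and each τ among the total mutual-visibility number, the outer mutual-visibility number, the total general position number, and the outer general position number, we have τ(S_p^2) = p, and in each case the diagonal {(i,i) : i ∈ [p]_0} is the unique maximum set. -/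
open SimpleGraph

/-! The diagonal vertices `(k,k)` are simplicial, and a simplicial vertex is never an inner vertex
of a shortest path; so the diagonal is a total general position set and has all four properties.
Conversely, each of the four properties implies outer mutual visibility. For `i ≠ j` and `a ≠ b`,
every shortest `(i,a),(j,b)`-path crosses the bridge `(i,j) ~ (j,i)`. As `p ≥ 3` leaves a free
choice of the far endpoint, this forces an outer mutual-visibility set to meet each row in at most
one vertex, and to miss row `j` entirely once it contains `(i,j)` with `i ≠ j`. Counting rows, it
has at most `p` vertices, and exactly `p` only if it is the diagonal. -/

section General

variable {V : Type*} {G : SimpleGraph V} {X : Set V}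

theorem Simplicial.eq_or_eq_of_mem_support {v : V} (hv : Simplicial G v) {u w : V}
    {q : G.Walk u w} (hq : q.length = G.dist u w) (hmem : v ∈ q.support) : v = u ∨ v = w := by
  by_contra! hne
  obtain ⟨n, rfl, hn⟩ := q.mem_support_iff_exists_getVert.mp hmem
  have h0 : n ≠ 0 := by rintro rfl; exact hne.1 q.getVert_zero
  have hlt : n < q.length := lt_of_le_of_ne hn (by rintro rfl; exact hne.2 q.getVert_length)
  have hx : G.Adj (q.getVert (n - 1)) (q.getVert n) := by
    simpa [Nat.sub_add_cancel (Nat.pos_of_ne_zero h0)] using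
      q.adj_getVert_succ (i := n - 1) (by omega)
  have hy : G.Adj (q.getVert n) (q.getVert (n + 1)) := q.adj_getVert_succ hlt
  -- the neighbours of `v` on `q` are equal or adjacent, so skipping `v` shortens `q`
  have hxy : G.dist (q.getVert (n - 1)) (q.getVert (n + 1)) ≤ 1 := by
    by_cases h : q.getVert (n - 1) = q.getVert (n + 1)
    · simp [h]
    · exact (dist_eq_one_iff_adj.mpr (hv _ _ hx.symm hy h)).le
  have hux : G.dist u (q.getVert (n - 1)) ≤ n - 1 :=
    (dist_le _).trans (by rw [Walk.take_length]; exact min_le_left _ _)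
  have hyw : G.dist (q.getVert (n + 1)) w ≤ q.length - (n + 1) :=
    (dist_le _).trans (Walk.drop_length q (n + 1)).le
  have := (q.take (n - 1)).reachable.dist_triangle_left w
  have := (hx.reachable.trans hy.reachable).dist_triangle_left w
  omega

theorem totalGPSet_of_forall_simplicial (hX : ∀ v ∈ X, Simplicial G v) : TotalGPSet G X :=
  fun _ _ _ hq _ hw hwX => (hX _ hwX).eq_or_eq_of_mem_support hq.2 hw

theorem Positionable.visible {u v : V} (h : Positionable G X u v) (huv : G.Reachable u v) :
    Visible G X u v := by
  obtain ⟨q, hpath, hq⟩ := huv.exists_path_of_dist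
  exact ⟨q, ⟨hpath, hq⟩, h q ⟨hpath, hq⟩⟩

theorem TotalGPSet.totalMVSet (h : TotalGPSet G X) (hG : G.Preconnected) : TotalMVSet G X :=
  fun u v => (h u v).visible (hG u v)

theorem TotalGPSet.outerGPSet (h : TotalGPSet G X) : OuterGPSet G X :=
  ⟨fun u _ v _ => h u v, fun u _ v _ => h u v⟩

theorem TotalMVSet.outerMVSet (h : TotalMVSet G X) : OuterMVSet G X :=
  ⟨fun u _ v _ => h u v, fun u _ v _ => h u v⟩

theorem OuterGPSet.outerMVSet (h : OuterGPSet G X) (hG : G.Preconnected) : OuterMVSet G X :=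
  ⟨fun u hu v hv => (h.1 u hu v hv).visible (hG u v),
    fun u hu v hv => (h.2 u hu v hv).visible (hG u v)⟩

theorem OuterMVSet.visible (h : OuterMVSet G X) {u : V} (hu : u ∈ X) (v : V) :
    Visible G X u v := by
  by_cases hv : v ∈ X
  · exact h.1 u hu v hv
  · exact h.2 u hu v hv

theorem not_visible_of_forall_mem_support {u v w : V}
    (hw : ∀ q : G.Walk u v, q.length = G.dist u v → w ∈ q.support)
    (hwX : w ∈ X) (hwu : w ≠ u) (hwv : w ≠ v) : ¬ Visible G X u v := by
  rintro ⟨q, hq, hX⟩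
  exact (hX w (hw q hq.2) hwX).elim hwu hwv

end General

theorem maxCard_eq_and_eq_singleton {V : Type*} {P : Set V → Prop} {D : Set V} {n : ℕ}
    (hD : P D) (hDn : D.ncard = n) (hle : ∀ X, P X → X.ncard ≤ n)
    (heq : ∀ X, P X → X.ncard = n → X = D) :
    maxCard P = n ∧ {X | P X ∧ X.ncard = n} = {D} := by
  refine ⟨IsGreatest.csSup_eq ⟨⟨D, hD, hDn⟩, ?_⟩, ?_⟩
  · rintro _ ⟨X, hX, rfl⟩
    exact hle X hX
  · ext X
    exact ⟨fun hX => heq X hX.1 hX.2, by rintro rfl; exact ⟨hD, hDn⟩⟩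

namespace SP2

variable {p : ℕ}

theorem reachable_of_fst_eq (i a b : Fin p) : (SP2 p).Reachable (i, a) (i, b) := by
  by_cases hab : a = b
  · rw [hab]
  · exact Adj.reachable (Or.inl ⟨rfl, hab⟩)

theorem dist_of_fst_eq_le_one (i a b : Fin p) : (SP2 p).dist (i, a) (i, b) ≤ 1 := by
  by_cases hab : a = b
  · simp [hab]
  · exact (dist_eq_one_iff_adj.mpr (Or.inl ⟨rfl, hab⟩)).le

theorem adj_swap {i j : Fin p} (hij : i ≠ j) : (SP2 p).Adj (i, j) (j, i) :=
  Or.inr ⟨rfl, rfl, hij⟩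

theorem preconnected : (SP2 p).Preconnected := by
  rintro ⟨i, a⟩ ⟨j, b⟩
  by_cases hij : i = j
  · rw [hij]
    exact reachable_of_fst_eq j a b
  · exact ((reachable_of_fst_eq i a j).trans (adj_swap hij).reachable).trans
      (reachable_of_fst_eq j i b)

theorem dist_le_three {i j : Fin p} (hij : i ≠ j) (a b : Fin p) :
    (SP2 p).dist (i, a) (j, b) ≤ 3 := by
  have := (preconnected (i, a) (i, j)).dist_triangle_left (j, b)
  have := (preconnected (i, j) (j, i)).dist_triangle_left (j, b)
  have := dist_of_fst_eq_le_one i a j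
  have := dist_of_fst_eq_le_one j i b
  have := dist_eq_one_iff_adj.mpr (adj_swap hij)
  omega

theorem mem_support_of_length_le_three {i j a b : Fin p} (hij : i ≠ j) (hab : a ≠ b)
    (q : (SP2 p).Walk (i, a) (j, b)) (hq : q.length ≤ 3) :
    (i, j) ∈ q.support ∧ (j, i) ∈ q.support := by
  rcases q with _ | ⟨h₁, _ | ⟨h₂, _ | ⟨h₃, _ | ⟨h₄, q⟩⟩⟩⟩
  · exact absurd rfl hij
  all_goals
    simp only [Walk.length_cons, Walk.length_nil, Walk.support_cons, Walk.support_nil,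
      List.mem_cons, List.not_mem_nil, or_false] at hq ⊢
    simp only [SP2] at *
    grind

theorem mem_support_of_length_eq_dist {i j a b : Fin p} (hij : i ≠ j) (hab : a ≠ b)
    (q : (SP2 p).Walk (i, a) (j, b)) (hq : q.length = (SP2 p).dist (i, a) (j, b)) :
    (i, j) ∈ q.support ∧ (j, i) ∈ q.support :=
  mem_support_of_length_le_three hij hab q (hq ▸ dist_le_three hij a b)

theorem simplicial_diag (k : Fin p) : Simplicial (SP2 p) (k, k) := by
  rintro ⟨i, a⟩ ⟨j, b⟩ (⟨rfl, -⟩ | ⟨-, -, hkk⟩) (⟨rfl, -⟩ | ⟨-, -, hkk⟩) hne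
  · exact Or.inl ⟨rfl, fun hab => hne (Prod.ext rfl hab)⟩
  all_goals exact absurd rfl hkk

theorem totalGPSet_diagonal : TotalGPSet (SP2 p) (Set.diagonal (Fin p)) := by
  refine totalGPSet_of_forall_simplicial ?_
  rintro ⟨k, l⟩ (rfl : k = l)
  exact simplicial_diag k

variable {X : Set (Fin p × Fin p)}

theorem notMem_of_outerMVSet (hp : 3 ≤ p) (hX : OuterMVSet (SP2 p) X) {i j : Fin p}
    (hij : i ≠ j) (hmem : (i, j) ∈ X) (b : Fin p) : (j, b) ∉ X := by
  intro hb
  obtain ⟨a, haj, hab⟩ := Fin.exists_ne_and_ne_of_two_lt j b (by omega)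
  refine not_visible_of_forall_mem_support (fun q hq => ?_) hmem ?_ ?_ (hX.visible hb (i, a))
  · exact (mem_support_of_length_eq_dist hij.symm (Ne.symm hab) q hq).2
  · exact fun h => hij (congrArg Prod.fst h)
  · exact fun h => haj (congrArg Prod.snd h).symm

theorem snd_eq_of_outerMVSet (hp : 3 ≤ p) (hX : OuterMVSet (SP2 p) X) {i a b : Fin p}
    (ha : (i, a) ∈ X) (hb : (i, b) ∈ X) : a = b := by
  by_contra hab
  -- one of the two vertices, say `(i,a)`, is off the diagonal
  wlog hai : a ≠ i generalizing a b
  · exact this hb ha (Ne.symm hab) (by rintro rfl; exact hab (not_not.mp hai))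
  obtain ⟨c, hci, hcb⟩ := Fin.exists_ne_and_ne_of_two_lt i b (by omega)
  refine not_visible_of_forall_mem_support (fun q hq => ?_) ha ?_ ?_ (hX.visible hb (a, c))
  · exact (mem_support_of_length_eq_dist (Ne.symm hai) (Ne.symm hcb) q hq).1
  · exact fun h => hab (congrArg Prod.snd h)
  · exact fun h => hai (congrArg Prod.fst h).symm

theorem injOn_fst_of_outerMVSet (hp : 3 ≤ p) (hX : OuterMVSet (SP2 p) X) :
    Set.InjOn Prod.fst X := by
  rintro ⟨i, a⟩ ha ⟨j, b⟩ hb (rfl : i = j)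
  rw [snd_eq_of_outerMVSet hp hX ha hb]

theorem ncard_le_of_outerMVSet (hp : 3 ≤ p) (hX : OuterMVSet (SP2 p) X) : X.ncard ≤ p := by
  rw [← (injOn_fst_of_outerMVSet hp hX).ncard_image]
  simpa using Set.ncard_le_ncard (Set.subset_univ (Prod.fst '' X))

theorem subset_diagonal_of_outerMVSet (hp : 3 ≤ p) (hX : OuterMVSet (SP2 p) X)
    (hcard : X.ncard = p) : X ⊆ Set.diagonal (Fin p) := by
  rintro ⟨i, j⟩ hmem
  by_contra hij
  -- row `j` of `X` is empty, so `X` has at most `p - 1` rows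
  have hsub : Prod.fst '' X ⊆ {j}ᶜ := by
    rintro _ ⟨⟨k, b⟩, hkb, rfl⟩ (rfl : k = j)
    exact notMem_of_outerMVSet hp hX hij hmem b hkb
  have := Set.ncard_le_ncard hsub
  rw [(injOn_fst_of_outerMVSet hp hX).ncard_image, Set.ncard_compl] at this
  simp only [Nat.card_eq_fintype_card, Fintype.card_fin, Set.ncard_singleton] at this
  omega

theorem ncard_diagonal : (Set.diagonal (Fin p)).ncard = p := by
  rw [← Set.range_diag, Set.ncard_range_of_injective Function.diag_injective]
  simp

theorem eq_diagonal_of_outerMVSet (hp : 3 ≤ p) (hX : OuterMVSet (SP2 p) X)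
    (hcard : X.ncard = p) : X = Set.diagonal (Fin p) :=
  Set.eq_of_subset_of_ncard_le (subset_diagonal_of_outerMVSet hp hX hcard)
    (by rw [ncard_diagonal, hcard])

theorem maxCard_eq_and_eq_singleton_diagonal (hp : 3 ≤ p) {P : Set (Fin p × Fin p) → Prop}
    (hD : P (Set.diagonal (Fin p))) (hP : ∀ X, P X → OuterMVSet (SP2 p) X) :
    maxCard P = p ∧ {X | P X ∧ X.ncard = p} = {Set.diagonal (Fin p)} :=
  maxCard_eq_and_eq_singleton hD ncard_diagonal (fun X hX => ncard_le_of_outerMVSet hp (hP X hX))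
    (fun X hX => eq_diagonal_of_outerMVSet hp (hP X hX))

end SP2

/-- `μ_t(S_p^2) = μ_o(S_p^2) = gp_t(S_p^2) = gp_o(S_p^2) = p`, with the diagonal as
the unique maximum set in each case. -/
theorem stmt_10 (p : ℕ) (hp : 3 ≤ p) :
    (maxCard (TotalMVSet (SP2 p)) = p ∧
      {X : Set (Fin p × Fin p) | TotalMVSet (SP2 p) X ∧ X.ncard = p} =
        {{v : Fin p × Fin p | v.1 = v.2}}) ∧
    (maxCard (OuterMVSet (SP2 p)) = p ∧
      {X : Set (Fin p × Fin p) | OuterMVSet (SP2 p) X ∧ X.ncard = p} =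
        {{v : Fin p × Fin p | v.1 = v.2}}) ∧
    (maxCard (TotalGPSet (SP2 p)) = p ∧
      {X : Set (Fin p × Fin p) | TotalGPSet (SP2 p) X ∧ X.ncard = p} =
        {{v : Fin p × Fin p | v.1 = v.2}}) ∧
    (maxCard (OuterGPSet (SP2 p)) = p ∧
      {X : Set (Fin p × Fin p) | OuterGPSet (SP2 p) X ∧ X.ncard = p} =
        {{v : Fin p × Fin p | v.1 = v.2}}) := by
  have hGP : TotalGPSet (SP2 p) (Set.diagonal (Fin p)) := SP2.totalGPSet_diagonal
  have hMV : TotalMVSet (SP2 p) (Set.diagonal (Fin p)) := hGP.totalMVSet SP2.preconnected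
  exact ⟨SP2.maxCard_eq_and_eq_singleton_diagonal hp hMV fun _ h => h.outerMVSet,
    SP2.maxCard_eq_and_eq_singleton_diagonal hp hMV.outerMVSet fun _ h => h,
    SP2.maxCard_eq_and_eq_singleton_diagonal hp hGP fun _ h =>
      h.outerGPSet.outerMVSet SP2.preconnected,
    SP2.maxCard_eq_and_eq_singleton_diagonal hp hGP.outerGPSet fun _ h =>
      h.outerMVSet SP2.preconnected⟩
end
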